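/- Let Ω₁ and Ω₂ be first and second Brocard points of triangle ABC and let L₂, L₃ be the orthogonal projections of O onto the symmedian lines BL and CL respectively. Then the following three conditions are equivalent: (i) b = c; (ii) Ω₁ = L₂; (iii) Ω₂ = L₃. -/

import Mathlib

/-!
In barycentric coordinates the first Brocard point is `(c²a² : a²b² : b²c²)`. Each of the three
equal angles is compared through its cotangent: for `u = p • e₁ + q • e₂`, `v = r • e₁ + s • e₂`
this is `⟪u, v⟫ / ((p s - q r) √(Gram e₁ e₂))`, so with `e₁ = B - A`, `e₂ = C - A` the angle
conditions become two equations linear in the coordinates. Since `O` is equidistant from the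
vertices, the foot of the perpendicular from `O` to the symmedian `BL` is
`(a² : a² + c² - b² : c²)`. Comparing coordinates, the two points agree iff
`(b² - c²)(a⁴ + a²c² + b²c²) = 0`, i.e. iff `b = c`. The second Brocard point of `ABC` is the
first one of `ACB`, which has the same symmedian point.
-/

open EuclideanGeometry
open scoped EuclideanGeometry

noncomputable section

open Real
open scoped RealInnerProductSpace

variable {V : Type*} [NormedAddCommGroup V] [InnerProductSpace ℝ V]

lemma inner_smul_add_smul_smul_add_smul (e₁ e₂ : V) (p q r s : ℝ) :
    ⟪p • e₁ + q • e₂, r • e₁ + s • e₂⟫ =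
      p * r * ⟪e₁, e₁⟫ + (p * s + q * r) * ⟪e₁, e₂⟫ + q * s * ⟪e₂, e₂⟫ := by
  simp only [inner_add_left, inner_add_right, real_inner_smul_left, real_inner_smul_right,
    real_inner_comm e₁ e₂]
  ring

lemma gram_smul_add_smul (e₁ e₂ : V) (p q r s : ℝ) :
    ⟪p • e₁ + q • e₂, p • e₁ + q • e₂⟫ * ⟪r • e₁ + s • e₂, r • e₁ + s • e₂⟫ -
        ⟪p • e₁ + q • e₂, r • e₁ + s • e₂⟫ * ⟪p • e₁ + q • e₂, r • e₁ + s • e₂⟫ =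
      (p * s - q * r) ^ 2 * (⟪e₁, e₁⟫ * ⟪e₂, e₂⟫ - ⟪e₁, e₂⟫ * ⟪e₁, e₂⟫) := by
  simp only [inner_smul_add_smul_smul_add_smul]
  ring

lemma LinearIndependent.gram_pos {e₁ e₂ : V} (h : LinearIndependent ℝ ![e₁, e₂]) :
    0 < ⟪e₁, e₁⟫ * ⟪e₂, e₂⟫ - ⟪e₁, e₂⟫ * ⟪e₁, e₂⟫ := by
  have he₂ : 0 < ⟪e₂, e₂⟫ := real_inner_self_pos.mpr (h.ne_zero 1)
  have hw : ⟪e₂, e₂⟫ • e₁ + (-⟪e₁, e₂⟫) • e₂ ≠ 0 := fun h0 =>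
    he₂.ne' (LinearIndependent.pair_iff.mp h _ _ h0).1
  have hw' := real_inner_self_pos.mpr hw
  rw [inner_smul_add_smul_smul_add_smul] at hw'
  nlinarith

namespace InnerProductGeometry

lemma angle_eq_angle_iff_of_sin_pos {u v u' v' : V} (h : 0 < sin (angle u v))
    (h' : 0 < sin (angle u' v')) :
    angle u v = angle u' v' ↔
      cos (angle u v) * sin (angle u' v') = cos (angle u' v') * sin (angle u v) := by
  refine ⟨fun heq => by rw [heq], fun heq => ?_⟩
  have hsub : sin (angle u v - angle u' v') = 0 := by rw [sin_sub]; linarith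
  have hlt : angle u v < π := (angle_le_pi u v).lt_of_ne fun hπ => by simp [hπ] at h
  have hlt' : angle u' v' < π := (angle_le_pi u' v').lt_of_ne fun hπ => by simp [hπ] at h'
  rw [sin_eq_zero_iff_of_lt_of_lt (by linarith [angle_nonneg u v])
    (by linarith [angle_nonneg u' v'])] at hsub
  linarith

lemma sin_angle_smul_add_smul_mul_norm_mul_norm (e₁ e₂ : V) {p q r s : ℝ}
    (hd : 0 ≤ p * s - q * r) :
    sin (angle (p • e₁ + q • e₂) (r • e₁ + s • e₂)) * (‖p • e₁ + q • e₂‖ * ‖r • e₁ + s • e₂‖) =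
      (p * s - q * r) * √(⟪e₁, e₁⟫ * ⟪e₂, e₂⟫ - ⟪e₁, e₂⟫ * ⟪e₁, e₂⟫) := by
  rw [sin_angle_mul_norm_mul_norm, gram_smul_add_smul, sqrt_mul (sq_nonneg _), sqrt_sq hd]

lemma angle_smul_add_smul_eq_angle_iff {e₁ e₂ : V} (he : LinearIndependent ℝ ![e₁, e₂])
    {p q r s p' q' r' s' : ℝ} (hd : 0 < p * s - q * r) (hd' : 0 < p' * s' - q' * r') :
    angle (p • e₁ + q • e₂) (r • e₁ + s • e₂) = angle (p' • e₁ + q' • e₂) (r' • e₁ + s' • e₂) ↔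
      (p' * s' - q' * r') * ⟪p • e₁ + q • e₂, r • e₁ + s • e₂⟫ =
        (p * s - q * r) * ⟪p' • e₁ + q' • e₂, r' • e₁ + s' • e₂⟫ := by
  set u := p • e₁ + q • e₂
  set v := r • e₁ + s • e₂
  set u' := p' • e₁ + q' • e₂
  set v' := r' • e₁ + s' • e₂
  set g := √(⟪e₁, e₁⟫ * ⟪e₂, e₂⟫ - ⟪e₁, e₂⟫ * ⟪e₁, e₂⟫)
  have hg : 0 < g := sqrt_pos.mpr he.gram_pos
  have hs := sin_angle_smul_add_smul_mul_norm_mul_norm e₁ e₂ hd.le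
  have hs' := sin_angle_smul_add_smul_mul_norm_mul_norm e₁ e₂ hd'.le
  have hc := cos_angle_mul_norm_mul_norm u v
  have hc' := cos_angle_mul_norm_mul_norm u' v'
  have hpos : 0 < sin (angle u v) * (‖u‖ * ‖v‖) := hs ▸ mul_pos hd hg
  have hpos' : 0 < sin (angle u' v') * (‖u'‖ * ‖v'‖) := hs' ▸ mul_pos hd' hg
  have key : (cos (angle u v) * sin (angle u' v') - cos (angle u' v') * sin (angle u v)) *
        ((‖u‖ * ‖v‖) * (‖u'‖ * ‖v'‖)) =
      ((p' * s' - q' * r') * ⟪u, v⟫ - (p * s - q * r) * ⟪u', v'⟫) * g := by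
    linear_combination (sin (angle u' v') * (‖u'‖ * ‖v'‖)) * hc + ⟪u, v⟫ * hs' -
      (sin (angle u v) * (‖u‖ * ‖v‖)) * hc' - ⟪u', v'⟫ * hs
  rw [angle_eq_angle_iff_of_sin_pos (pos_of_mul_pos_left hpos (by positivity))
      (pos_of_mul_pos_left hpos' (by positivity)), ← sub_eq_zero,
    ← mul_eq_zero_iff_right (mul_pos (pos_of_mul_pos_right hpos (sin_angle_nonneg u v))
      (pos_of_mul_pos_right hpos' (sin_angle_nonneg u' v'))).ne',
    key, mul_eq_zero_iff_right hg.ne', sub_eq_zero]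

end InnerProductGeometry

open InnerProductGeometry (angle_smul_add_smul_eq_angle_iff)

lemma linearIndependent_vsub_of_affineIndependent {A B C : V}
    (h : AffineIndependent ℝ ![A, B, C]) : LinearIndependent ℝ ![B - A, C - A] := by
  rw [affineIndependent_iff_linearIndependent_vsub ℝ _ (0 : Fin 3),
    ← linearIndependent_equiv (finSuccAboveEquiv (0 : Fin 3))] at h
  convert! h
  ext i
  fin_cases i <;> rfl

lemma smul_add_smul_add_smul_eq_iff {A B C : V} (hli : LinearIndependent ℝ ![B - A, C - A])
    {x y z x' y' z' : ℝ} (h : x + y + z = 1) (h' : x' + y' + z' = 1) :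
    x • A + y • B + z • C = x' • A + y' • B + z' • C ↔ y = y' ∧ z = z' := by
  have hA : ∀ {x y z : ℝ}, x + y + z = 1 →
      x • A + y • B + z • C = A + (y • (B - A) + z • (C - A)) := fun h => by
    obtain rfl : _ = 1 - _ - _ := eq_sub_of_add_eq (eq_sub_of_add_eq h)
    module
  rw [hA h, hA h', add_right_inj]
  refine ⟨hli.eq_of_pair, ?_⟩
  rintro ⟨rfl, rfl⟩
  rfl

lemma exists_eq_smul_add_smul_add_smul_of_mem_interior_convexHull {E : Type*}
    [NormedAddCommGroup E] [NormedSpace ℝ E] [FiniteDimensional ℝ E] (hE : Module.finrank ℝ E = 2)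
    {A B C P : E} (h : AffineIndependent ℝ ![A, B, C])
    (hP : P ∈ interior (convexHull ℝ {A, B, C})) :
    ∃ x y z : ℝ, 0 < x ∧ 0 < y ∧ 0 < z ∧ x + y + z = 1 ∧ P = x • A + y • B + z • C := by
  have htop : affineSpan ℝ (Set.range ![A, B, C]) = ⊤ := by
    rw [h.affineSpan_eq_top_iff_card_eq_finrank_add_one, hE]; simp
  let T : AffineBasis (Fin 3) ℝ E := ⟨_, h, htop⟩
  have hrange : Set.range T = {A, B, C} := by
    change Set.range ![A, B, C] = _
    rw [Matrix.range_cons, Matrix.range_cons_cons_empty, Set.singleton_union]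
  rw [← hrange, T.interior_convexHull] at hP
  refine ⟨T.coord 0 P, T.coord 1 P, T.coord 2 P, hP 0, hP 1, hP 2, ?_, ?_⟩
  · rw [← T.sum_coord_apply_eq_one P, Fin.sum_univ_three]
  · conv_lhs => rw [← T.linear_combination_coord_eq_self P, Fin.sum_univ_three]
    rfl

lemma dist_sq_eq_inner_self_sub (A B : V) : dist A B ^ 2 = ⟪B - A, B - A⟫ := by
  rw [dist_comm, dist_eq_norm, real_inner_self_eq_norm_sq]

lemma dist_sq_eq_inner_sub_sub (A B C : V) :
    dist B C ^ 2 = ⟪B - A, B - A⟫ - 2 * ⟪B - A, C - A⟫ + ⟪C - A, C - A⟫ := by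
  rw [dist_eq_norm, ← sub_sub_sub_cancel_right B C A, norm_sub_sq_real,
    real_inner_self_eq_norm_sq, real_inner_self_eq_norm_sq]

lemma two_mul_inner_sub_sub_of_dist_eq {O A B : V} (h : dist O A = dist O B) :
    2 * ⟪O - A, B - A⟫ = dist A B ^ 2 := by
  have h' := dist_sq_eq_inner_sub_sub A O B
  rw [dist_sq_eq_inner_self_sub A B, ← h, dist_comm, dist_sq_eq_inner_self_sub A O] at *
  linarith

/-- `2 a² + 2 c² - b²` is four times the squared median from `B`: `‖2 • (B - A) - (C - A)‖²`. -/
lemma two_mul_dist_sq_add_two_mul_dist_sq_sub_dist_sq_pos {A B C : V}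
    (hli : LinearIndependent ℝ ![B - A, C - A]) :
    0 < 2 * dist B C ^ 2 + 2 * dist A B ^ 2 - dist C A ^ 2 := by
  have h := real_inner_self_pos.mpr fun h0 : (2 : ℝ) • (B - A) + (-1 : ℝ) • (C - A) = 0 =>
    two_ne_zero (LinearIndependent.pair_iff.mp hli _ _ h0).1
  rw [inner_smul_add_smul_smul_add_smul] at h
  rw [dist_sq_eq_inner_sub_sub A B C, dist_sq_eq_inner_self_sub A B, dist_comm C A,
    dist_sq_eq_inner_self_sub A C]
  linarith

theorem brocard_barycentric {A B C Ω : V} {a b c x y z : ℝ}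
    (hli : LinearIndependent ℝ ![B - A, C - A])
    (ha : a = dist B C) (hb : b = dist C A) (hc : c = dist A B)
    (hx : 0 < x) (hy : 0 < y) (hz : 0 < z) (hxyz : x + y + z = 1)
    (hΩ : Ω = x • A + y • B + z • C) (h₁ : ∠ Ω A B = ∠ Ω B C) (h₂ : ∠ Ω B C = ∠ Ω C A) :
    y * (a ^ 2 * b ^ 2 + b ^ 2 * c ^ 2 + c ^ 2 * a ^ 2) = a ^ 2 * b ^ 2 ∧
      z * (a ^ 2 * b ^ 2 + b ^ 2 * c ^ 2 + c ^ 2 * a ^ 2) = b ^ 2 * c ^ 2 := by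
  have ha0 : 0 < a := ha ▸ dist_pos.mpr fun hBC => by
    simpa [hBC] using LinearIndependent.pair_iff.mp hli 1 (-1)
  set e₁ := B - A
  set e₂ := C - A
  have hc2 : c ^ 2 = ⟪e₁, e₁⟫ := hc ▸ dist_sq_eq_inner_self_sub A B
  have hb2 : b ^ 2 = ⟪e₂, e₂⟫ := by rw [hb, dist_comm]; exact dist_sq_eq_inner_self_sub A C
  have ha2 : a ^ 2 = ⟪e₁, e₁⟫ - 2 * ⟪e₁, e₂⟫ + ⟪e₂, e₂⟫ := ha ▸ dist_sq_eq_inner_sub_sub A B C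
  obtain rfl : x = 1 - y - z := by linarith
  have hBA : B -ᵥ A = (1 : ℝ) • e₁ + (0 : ℝ) • e₂ := by simp [e₁]
  have hCB : C -ᵥ B = (-1 : ℝ) • e₁ + (1 : ℝ) • e₂ := by simp [e₁, e₂]
  have hAC : A -ᵥ C = (0 : ℝ) • e₁ + (-1 : ℝ) • e₂ := by simp [e₂]
  have hΩA : Ω -ᵥ A = y • e₁ + z • e₂ := by rw [vsub_eq_sub, hΩ]; module
  have hΩB : Ω -ᵥ B = (y - 1) • e₁ + z • e₂ := by rw [vsub_eq_sub, hΩ]; module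
  have hΩC : Ω -ᵥ C = y • e₁ + (z - 1) • e₂ := by rw [vsub_eq_sub, hΩ]; module
  rw [angle_comm Ω A B, angle_comm Ω B C, EuclideanGeometry.angle, EuclideanGeometry.angle,
    hBA, hCB, hΩA, hΩB] at h₁
  rw [angle_comm Ω B C, angle_comm Ω C A, EuclideanGeometry.angle, EuclideanGeometry.angle,
    hCB, hAC, hΩB, hΩC] at h₂
  have hcot₁ := (angle_smul_add_smul_eq_angle_iff hli (by linarith) (by linarith)).mp h₁
  have hcot₂ := (angle_smul_add_smul_eq_angle_iff hli (by linarith) (by linarith)).mp h₂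
  simp only [inner_smul_add_smul_smul_add_smul, ← hc2, ← hb2] at hcot₁ hcot₂
  have hK : ⟪e₁, e₂⟫ = (b ^ 2 + c ^ 2 - a ^ 2) / 2 := by linarith
  rw [hK] at hcot₁ hcot₂
  have hxz : b ^ 2 * (1 - y - z) = a ^ 2 * z := by linear_combination hcot₁ - hcot₂
  have hxy : c ^ 2 * y = b ^ 2 * (1 - y - z) := by
    have h : a ^ 2 * (1 - y - z) * (c ^ 2 * y - b ^ 2 * (1 - y - z)) = 0 := by
      linear_combination a ^ 2 * hcot₁ - (a ^ 2 * (1 - y)) * hxz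
    linear_combination (mul_eq_zero_iff_left (mul_pos (pow_pos ha0 2) hx).ne').mp h
  constructor
  · linear_combination (a ^ 2 + b ^ 2) * hxy + b ^ 2 * hxz
  · linear_combination (-(b ^ 2)) * hxy - (b ^ 2 + c ^ 2) * hxz

theorem coe_orthogonalProjection_symmedian {A B C O L : V} {a b c : ℝ}
    (hOA : dist O A = dist O B) (hOC : dist O C = dist O B)
    (ha : a = dist B C) (hb : b = dist C A) (hc : c = dist A B)
    (hL : L = (a ^ 2 + b ^ 2 + c ^ 2)⁻¹ • (a ^ 2 • A + b ^ 2 • B + c ^ 2 • C))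
    (hT : 2 * a ^ 2 + 2 * c ^ 2 - b ^ 2 ≠ 0) :
    (orthogonalProjection (affineSpan ℝ {B, L}) O : V) =
      (a ^ 2 / (2 * a ^ 2 + 2 * c ^ 2 - b ^ 2)) • A +
        ((a ^ 2 + c ^ 2 - b ^ 2) / (2 * a ^ 2 + 2 * c ^ 2 - b ^ 2)) • B +
          (c ^ 2 / (2 * a ^ 2 + 2 * c ^ 2 - b ^ 2)) • C := by
  set T := 2 * a ^ 2 + 2 * c ^ 2 - b ^ 2
  have hσ : a ^ 2 + b ^ 2 + c ^ 2 ≠ 0 := fun h => hT <| by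
    nlinarith [sq_nonneg a, sq_nonneg b, sq_nonneg c]
  set u := A - B
  set w := C - B
  have huu : ⟪u, u⟫ = c ^ 2 := by rw [hc, dist_comm, dist_sq_eq_inner_self_sub]
  have hww : ⟪w, w⟫ = a ^ 2 := by rw [ha, dist_sq_eq_inner_self_sub]
  have huw : 2 * ⟪u, w⟫ = c ^ 2 + a ^ 2 - b ^ 2 := by
    rw [hb, dist_comm, dist_sq_eq_inner_sub_sub B A C]; linarith
  have hOu : 2 * ⟪O - B, u⟫ = c ^ 2 := by
    rw [hc, dist_comm, two_mul_inner_sub_sub_of_dist_eq hOA.symm]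
  have hOw : 2 * ⟪O - B, w⟫ = a ^ 2 := by
    rw [ha, two_mul_inner_sub_sub_of_dist_eq hOC.symm]
  rw [coe_orthogonalProjection_eq_iff_mem, direction_affineSpan, vectorSpan_pair_rev,
    Submodule.mem_orthogonal_singleton_iff_inner_right]
  constructor
  · convert AffineMap.lineMap_mem_affineSpan_pair ((a ^ 2 + b ^ 2 + c ^ 2) / T) B L using 1
    rw [AffineMap.lineMap_apply, hL, vsub_eq_sub, vadd_eq_add]
    match_scalars <;> grind
  · have hLB : L -ᵥ B =
        (a ^ 2 / (a ^ 2 + b ^ 2 + c ^ 2)) • u + (c ^ 2 / (a ^ 2 + b ^ 2 + c ^ 2)) • w := by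
      rw [hL, vsub_eq_sub]
      match_scalars <;> grind
    have hOP : O -ᵥ ((a ^ 2 / T) • A + ((a ^ 2 + c ^ 2 - b ^ 2) / T) • B + (c ^ 2 / T) • C) =
        (O - B) - ((a ^ 2 / T) • u + (c ^ 2 / T) • w) := by
      rw [vsub_eq_sub]
      match_scalars <;> grind
    rw [hLB, hOP, inner_sub_right, inner_smul_add_smul_smul_add_smul, inner_add_left,
      real_inner_smul_left, real_inner_smul_left, real_inner_comm (O - B), real_inner_comm (O - B),
      huu, hww]
    field_simp
    linear_combination (a ^ 2 * T / 2) * hOu + (c ^ 2 * T / 2) * hOw - a ^ 2 * c ^ 2 * huw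

lemma brocard_coords_eq_iff {a b c y z : ℝ} (hb : 0 < b) (hc : 0 < c)
    (hT : 2 * a ^ 2 + 2 * c ^ 2 - b ^ 2 ≠ 0)
    (hy : y * (a ^ 2 * b ^ 2 + b ^ 2 * c ^ 2 + c ^ 2 * a ^ 2) = a ^ 2 * b ^ 2)
    (hz : z * (a ^ 2 * b ^ 2 + b ^ 2 * c ^ 2 + c ^ 2 * a ^ 2) = b ^ 2 * c ^ 2) :
    y = (a ^ 2 + c ^ 2 - b ^ 2) / (2 * a ^ 2 + 2 * c ^ 2 - b ^ 2) ∧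
        z = c ^ 2 / (2 * a ^ 2 + 2 * c ^ 2 - b ^ 2) ↔ b = c := by
  constructor
  · rintro ⟨hy', -⟩
    have hyT : y * (2 * a ^ 2 + 2 * c ^ 2 - b ^ 2) = a ^ 2 + c ^ 2 - b ^ 2 := by
      rw [hy', div_mul_cancel₀ _ hT]
    have hfac : (b ^ 2 - c ^ 2) * (a ^ 4 + a ^ 2 * c ^ 2 + b ^ 2 * c ^ 2) = 0 := by
      linear_combination (-(2 * a ^ 2 + 2 * c ^ 2 - b ^ 2)) * hy +
        (a ^ 2 * b ^ 2 + b ^ 2 * c ^ 2 + c ^ 2 * a ^ 2) * hyT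
    have hbc : b ^ 2 = c ^ 2 :=
      sub_eq_zero.mp ((mul_eq_zero_iff_right (by positivity)).mp hfac)
    exact (pow_left_inj₀ hb.le hc.le two_ne_zero).mp hbc
  · rintro rfl
    have hb2 : b ^ 2 ≠ 0 := (pow_pos hb 2).ne'
    refine ⟨?_, ?_⟩ <;> rw [eq_div_iff hT] <;> apply mul_left_cancel₀ hb2
    · linear_combination hy
    · linear_combination hz

theorem brocard_eq_orthogonalProjection_symmedian_iff {A B C O L Ω : V} {a b c x y z : ℝ}
    (hli : LinearIndependent ℝ ![B - A, C - A])
    (hOA : dist O A = dist O B) (hOC : dist O C = dist O B)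
    (ha : a = dist B C) (hb : b = dist C A) (hc : c = dist A B)
    (hL : L = (a ^ 2 + b ^ 2 + c ^ 2)⁻¹ • (a ^ 2 • A + b ^ 2 • B + c ^ 2 • C))
    (hx : 0 < x) (hy : 0 < y) (hz : 0 < z) (hxyz : x + y + z = 1)
    (hΩ : Ω = x • A + y • B + z • C) (h₁ : ∠ Ω A B = ∠ Ω B C) (h₂ : ∠ Ω B C = ∠ Ω C A) :
    b = c ↔ Ω = orthogonalProjection (affineSpan ℝ {B, L}) O := by
  obtain ⟨hyS, hzS⟩ := brocard_barycentric hli ha hb hc hx hy hz hxyz hΩ h₁ h₂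
  have hb0 : 0 < b := hb ▸ dist_pos.mpr (sub_ne_zero.mp (hli.ne_zero 1))
  have hc0 : 0 < c := hc ▸ dist_pos.mpr (sub_ne_zero.mp (hli.ne_zero 0)).symm
  have hT : 0 < 2 * a ^ 2 + 2 * c ^ 2 - b ^ 2 := by
    rw [ha, hb, hc]; exact two_mul_dist_sq_add_two_mul_dist_sq_sub_dist_sq_pos hli
  rw [hΩ, coe_orthogonalProjection_symmedian hOA hOC ha hb hc hL hT.ne',
    smul_add_smul_add_smul_eq_iff hli hxyz
      (by rw [← add_div, ← add_div, div_eq_one_iff_eq hT.ne']; ring),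
    brocard_coords_eq_iff hb0 hc0 hT.ne' hyS hzS]

theorem stmt18_general (A B C O L Ω₁ Ω₂ L₂ L₃ : EuclideanSpace ℝ (Fin 2)) (R a b c : ℝ)
    (hABC : AffineIndependent ℝ ![A, B, C])
    (hOA : dist O A = R) (hOB : dist O B = R) (hOC : dist O C = R)
    (ha : a = dist B C) (hb : b = dist C A) (hc : c = dist A B)
    (hL : L = (a ^ 2 + b ^ 2 + c ^ 2)⁻¹ • (a ^ 2 • A + b ^ 2 • B + c ^ 2 • C))
    (hΩ₁ : Ω₁ ∈ interior (convexHull ℝ ({A, B, C} : Set (EuclideanSpace ℝ (Fin 2)))))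
    (hΩ₁₁ : ∠ Ω₁ A B = ∠ Ω₁ B C) (hΩ₁₂ : ∠ Ω₁ B C = ∠ Ω₁ C A)
    (hΩ₂ : Ω₂ ∈ interior (convexHull ℝ ({A, B, C} : Set (EuclideanSpace ℝ (Fin 2)))))
    (hΩ₂₁ : ∠ Ω₂ A C = ∠ Ω₂ C B) (hΩ₂₂ : ∠ Ω₂ C B = ∠ Ω₂ B A)
    (hL₂ : L₂ = EuclideanGeometry.orthogonalProjection (affineSpan ℝ {B, L}) O)
    (hL₃ : L₃ = EuclideanGeometry.orthogonalProjection (affineSpan ℝ {C, L}) O) :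
    (b = c ↔ Ω₁ = L₂) ∧ (b = c ↔ Ω₂ = L₃) := by
  have hli := linearIndependent_vsub_of_affineIndependent hABC
  obtain ⟨x, y, z, hx, hy, hz, hxyz, rfl⟩ :=
    exists_eq_smul_add_smul_add_smul_of_mem_interior_convexHull
      finrank_euclideanSpace_fin hABC hΩ₁
  obtain ⟨x', y', z', hx', hy', hz', hxyz', rfl⟩ :=
    exists_eq_smul_add_smul_add_smul_of_mem_interior_convexHull
      finrank_euclideanSpace_fin hABC hΩ₂
  subst hL₂ hL₃
  refine ⟨brocard_eq_orthogonalProjection_symmedian_iff hli (hOA.trans hOB.symm)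
    (hOC.trans hOB.symm) ha hb hc hL hx hy hz hxyz rfl hΩ₁₁ hΩ₁₂, ?_⟩
  rw [eq_comm (a := b)]
  refine brocard_eq_orthogonalProjection_symmedian_iff (LinearIndependent.pair_symm_iff.mp hli)
    (hOA.trans hOC.symm) (hOB.trans hOC.symm) (ha.trans (dist_comm B C))
    (hc.trans (dist_comm A B)) (hb.trans (dist_comm C A)) ?_ hx' hz' hy' (by linarith)
    (add_right_comm _ _ _) hΩ₂₁ hΩ₂₂
  rw [hL, add_right_comm (a ^ 2), add_right_comm (a ^ 2 • A)]

theorem stmt18 (A B C O L Ω₁ Ω₂ L₂ L₃ : EuclideanSpace ℝ (Fin 2)) (R a b c : ℝ)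
    (hABC : AffineIndependent ℝ ![A, B, C])
    (hR : 0 < R) (hOA : dist O A = R) (hOB : dist O B = R) (hOC : dist O C = R)
    (ha : a = dist B C) (hb : b = dist C A) (hc : c = dist A B)
    (hL : L = (a ^ 2 + b ^ 2 + c ^ 2)⁻¹ • (a ^ 2 • A + b ^ 2 • B + c ^ 2 • C))
    (hΩ₁ : Ω₁ ∈ interior (convexHull ℝ ({A, B, C} : Set (EuclideanSpace ℝ (Fin 2)))))
    (hΩ₁₁ : ∠ Ω₁ A B = ∠ Ω₁ B C) (hΩ₁₂ : ∠ Ω₁ B C = ∠ Ω₁ C A)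
    (hΩ₂ : Ω₂ ∈ interior (convexHull ℝ ({A, B, C} : Set (EuclideanSpace ℝ (Fin 2)))))
    (hΩ₂₁ : ∠ Ω₂ A C = ∠ Ω₂ C B) (hΩ₂₂ : ∠ Ω₂ C B = ∠ Ω₂ B A)
    (hL₂ : L₂ = EuclideanGeometry.orthogonalProjection (affineSpan ℝ {B, L}) O)
    (hL₃ : L₃ = EuclideanGeometry.orthogonalProjection (affineSpan ℝ {C, L}) O) :
    (b = c ↔ Ω₁ = L₂) ∧ (b = c ↔ Ω₂ = L₃) :=
  stmt18_general A B C O L Ω₁ Ω₂ L₂ L₃ R a b c hABC hOA hOB hOC ha hb hc hL hΩ₁ hΩ₁₁ hΩ₁₂ hΩ₂ hΩ₂₁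
    hΩ₂₂ hL₂ hL₃
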